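/- arXiv:2407.03899 — 9 statements merged into one kernel-verified Lean document; each statement's English description precedes it below -/
import Mathlib

section
/- Consider the M-user hybrid-NOMA power minimization problem: given channel gains h_{m,n} > 0 for 1 ≤ n ≤ m ≤ M and target rate R > 0, minimize ∑_{m=1}^{M} ∑_{n=1}^{m} P_{m,n} over nonnegative powers P_{m,n} ≥ 0 subject to, for each m, ∑_{n=1}^{m} log(1 + h_{m,n}P_{m,n}/(1 + ∑_{j=n}^{m-1} h_{j,n}P_{j,n})) ≥ R (natural logarithm). If the pure OMA allocation, given by P_{m,m} = (e^R − 1)/h_{m,m} for all m and P_{m,n} = 0 for all n < m, is a global minimizer of this problem, then h_{m,n} ≤ h_{m,m} for all 1 ≤ n ≤ m−1 and all 1 ≤ m ≤ M. -/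
/-- Total transmit power of allocation `P` in the `M`-user hybrid-NOMA system. -/
noncomputable def totalPower (M : ℕ) (P : ℕ → ℕ → ℝ) : ℝ :=
  ∑ m ∈ Finset.Icc 1 M, ∑ n ∈ Finset.Icc 1 m, P m n

/-- Feasibility for the `M`-user hybrid-NOMA power minimization problem: all powers are
nonnegative, and each user `m` achieves the target rate `R`, where its rate on subcarrier `n`
is `log (1 + h m n * P m n / (1 + ∑_{j=n}^{m-1} h j n * P j n))` (natural logarithm). -/
noncomputable def Feasible (M : ℕ) (h : ℕ → ℕ → ℝ) (R : ℝ) (P : ℕ → ℕ → ℝ) : Prop :=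
  (∀ m n, 0 ≤ P m n) ∧
  ∀ m ∈ Finset.Icc 1 M,
    R ≤ ∑ n ∈ Finset.Icc 1 m,
      Real.log (1 + h m n * P m n / (1 + ∑ j ∈ Finset.Icc n (m - 1), h j n * P j n))

/-- The pure OMA allocation: `P m m = (e^R - 1)/h m m` and `P m n = 0` for `n ≠ m`. -/
noncomputable def omaAlloc (h : ℕ → ℕ → ℝ) (R : ℝ) : ℕ → ℕ → ℝ :=
  fun m n => if n = m then (Real.exp R - 1) / h m m else 0

/-!
If `h m m < h m n` for some `n < m`, user `m` can move part of its rate to subcarrier `n`.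
Decoded there after user `n`'s OMA signal, it sees noise plus interference `exp R`, and because
its gain on `n` is larger, a small enough shift lowers the total power while every user keeps
rate `R`; so the OMA allocation is not a minimizer.
-/

open Finset Real

noncomputable def userRate (h P : ℕ → ℕ → ℝ) (m : ℕ) : ℝ :=
  ∑ n ∈ Icc 1 m, log (1 + h m n * P m n / (1 + ∑ j ∈ Icc n (m - 1), h j n * P j n))

noncomputable def splitAlloc (h : ℕ → ℕ → ℝ) (R : ℝ) (m n : ℕ) (x y : ℝ) : ℕ → ℕ → ℝ :=
  fun i k => if i = m then (if k = n then x else if k = m then y else 0) else omaAlloc h R i k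

section

variable {h : ℕ → ℕ → ℝ} {R : ℝ}

lemma omaAlloc_of_ne {i k : ℕ} (hki : k ≠ i) : omaAlloc h R i k = 0 := if_neg hki

lemma userRate_eq_of_row_eq_omaAlloc {P : ℕ → ℕ → ℝ} {i : ℕ} (hi : 1 ≤ i) (hii : h i i ≠ 0)
    (hrow : ∀ k, P i k = omaAlloc h R i k) : userRate h P i = R := by
  rw [userRate, sum_eq_single_of_mem i (mem_Icc.mpr ⟨hi, le_rfl⟩)]
  · rw [Icc_eq_empty (by omega), sum_empty, hrow, omaAlloc, if_pos rfl, add_zero, div_one,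
      mul_div_cancel₀ _ hii, add_sub_cancel, log_exp]
  · intro k _ hki
    rw [hrow, omaAlloc_of_ne hki, mul_zero, zero_div, add_zero, log_one]

lemma one_add_interference_omaAlloc {P : ℕ → ℕ → ℝ} {m n : ℕ} (hnm : n < m) (hnn : h n n ≠ 0)
    (hrows : ∀ j < m, ∀ k, P j k = omaAlloc h R j k) :
    1 + ∑ j ∈ Icc n (m - 1), h j n * P j n = exp R := by
  rw [sum_eq_single_of_mem n (mem_Icc.mpr ⟨le_rfl, by omega⟩)]
  · rw [hrows n hnm, omaAlloc, if_pos rfl, mul_div_cancel₀ _ hnn, add_sub_cancel]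
  · intro j hj hjn
    rw [hrows j (by grind), omaAlloc_of_ne (Ne.symm hjn), mul_zero]

variable {m n : ℕ} {x y : ℝ}

lemma userRate_splitAlloc (hn : 1 ≤ n) (hnm : n < m) (hnn : h n n ≠ 0) :
    userRate h (splitAlloc h R m n x y) m = log (1 + h m n * x / exp R) + log (1 + h m m * y) := by
  have hrows : ∀ j < m, ∀ k, splitAlloc h R m n x y j k = omaAlloc h R j k :=
    fun j hj k => if_neg hj.ne
  rw [userRate, sum_eq_add_of_mem n m (mem_Icc.mpr ⟨hn, hnm.le⟩) (mem_Icc.mpr ⟨by omega, le_rfl⟩)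
    hnm.ne]
  · rw [one_add_interference_omaAlloc hnm hnn hrows, Icc_eq_empty (by omega), sum_empty]
    simp [splitAlloc, hnm.ne']
  · rintro k - ⟨hkn, hkm⟩
    simp [splitAlloc, hkn, hkm]

lemma splitAlloc_nonneg (homa : ∀ i k, 0 ≤ omaAlloc h R i k) (hx : 0 ≤ x) (hy : 0 ≤ y) (i k : ℕ) :
    0 ≤ splitAlloc h R m n x y i k := by
  unfold splitAlloc
  split_ifs
  exacts [hx, hy, le_rfl, homa i k]

lemma totalPower_update_row {M : ℕ} {P Q : ℕ → ℕ → ℝ} (hm : m ∈ Icc 1 M)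
    (hrows : ∀ i ≠ m, Q i = P i) :
    totalPower M Q = totalPower M P + (∑ k ∈ Icc 1 m, Q m k - ∑ k ∈ Icc 1 m, P m k) := by
  unfold totalPower
  have hrest : ∑ i ∈ (Icc 1 M).erase m, ∑ k ∈ Icc 1 i, Q i k
      = ∑ i ∈ (Icc 1 M).erase m, ∑ k ∈ Icc 1 i, P i k :=
    sum_congr rfl fun i hi => by rw [hrows i (ne_of_mem_erase hi)]
  rw [← add_sum_erase _ _ hm, ← add_sum_erase _ _ hm, hrest]
  ring

lemma totalPower_splitAlloc {M : ℕ} (hm : m ∈ Icc 1 M) (hn : n ∈ Icc 1 (m - 1)) :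
    totalPower M (splitAlloc h R m n x y)
      = totalPower M (omaAlloc h R) + (x + y - (exp R - 1) / h m m) := by
  have hnm : n < m := by grind
  rw [totalPower_update_row (Q := splitAlloc h R m n x y) hm fun i hi => funext fun k => if_neg hi]
  have hsplit : ∑ k ∈ Icc 1 m, splitAlloc h R m n x y m k = x + y := by
    rw [sum_eq_add_of_mem n m (by grind) (by grind) hnm.ne]
    · simp [splitAlloc, hnm.ne']
    · rintro k - ⟨hkn, hkm⟩
      simp [splitAlloc, hkn, hkm]
  have homa : ∑ k ∈ Icc 1 m, omaAlloc h R m k = (exp R - 1) / h m m := by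
    simp only [omaAlloc]
    rw [sum_ite_eq_of_mem' _ _ _ (by grind)]
  rw [hsplit, homa]

end

/-- Splitting the rate as `log u + log (exp R / u)` saves the power
`exp R * (u - 1) * (a - b * u) / (a * b * u)`, positive for `1 < u < a / b`. -/
lemma exists_split_cheaper {a b R : ℝ} (hb : 0 < b) (hba : b < a) (hR : 0 < R) :
    ∃ x y, 0 ≤ x ∧ 0 ≤ y ∧ R ≤ log (1 + a * x / exp R) + log (1 + b * y) ∧
      x + y < (exp R - 1) / b := by
  set E := exp R
  have hE : 1 < E := one_lt_exp_iff.mpr hR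
  have ha : 0 < a := hb.trans hba
  obtain ⟨u, hu1, hu⟩ := exists_between (lt_min hE ((one_lt_div hb).mpr hba))
  have huE : u < E := hu.trans_le (min_le_left _ _)
  have hbu : b * u < a := by
    have := hu.trans_le (min_le_right _ _)
    rwa [lt_div_iff₀ hb, mul_comm] at this
  have hu0 : 0 < u := by linarith
  refine ⟨E * (u - 1) / a, (E / u - 1) / b, by positivity, ?_, ?_, ?_⟩
  · exact div_nonneg (by rw [le_sub_iff_add_le, zero_add, le_div_iff₀ hu0]; linarith) hb.le
  · have hx : 1 + a * (E * (u - 1) / a) / E = u := by field_simp; ring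
    have hy : 1 + b * ((E / u - 1) / b) = E / u := by field_simp; ring
    rw [hx, hy, ← log_mul hu0.ne' (by positivity), mul_div_cancel₀ _ hu0.ne', log_exp]
  · have hsaving : (E - 1) / b - (E * (u - 1) / a + (E / u - 1) / b)
        = E * (u - 1) * (a - b * u) / (a * b * u) := by
      field_simp; ring
    have : 0 < E * (u - 1) * (a - b * u) / (a * b * u) := by
      apply div_pos _ (by positivity)
      exact mul_pos (mul_pos (by linarith) (by linarith)) (by linarith)
    linarith

theorem stmt_0_general (M : ℕ) (h : ℕ → ℕ → ℝ) (R : ℝ) (hR : 0 < R)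
    (hpos : ∀ m ∈ Finset.Icc 1 M, ∀ n ∈ Finset.Icc 1 m, 0 < h m n)
    (hfeas : Feasible M h R (omaAlloc h R))
    (hopt : ∀ P, Feasible M h R P → totalPower M (omaAlloc h R) ≤ totalPower M P) :
    ∀ m ∈ Finset.Icc 1 M, ∀ n ∈ Finset.Icc 1 (m - 1), h m n ≤ h m m := by
  intro m hm n hn
  by_contra! hcheap
  have hnm : n < m := by grind
  have hmm_pos : 0 < h m m := hpos m hm m (by grind)
  have hnn_pos : 0 < h n n := hpos n (by grind) n (by grind)
  obtain ⟨x, y, hx, hy, hrate, hcheaper⟩ := exists_split_cheaper hmm_pos hcheap hR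
  have hsplit : Feasible M h R (splitAlloc h R m n x y) := by
    refine ⟨splitAlloc_nonneg hfeas.1 hx hy, fun i hi => ?_⟩
    change R ≤ userRate h _ i
    rcases eq_or_ne i m with rfl | him
    · rwa [userRate_splitAlloc (by grind) hnm hnn_pos.ne']
    · exact (userRate_eq_of_row_eq_omaAlloc (by grind) (hpos i hi i (by grind)).ne'
        fun k => if_neg him).ge
  have hmin := hopt _ hsplit
  rw [totalPower_splitAlloc hm hn] at hmin
  linarith

/-- If the pure OMA allocation is a global minimizer of the `M`-user hybrid-NOMA power
minimization problem, then `h m n ≤ h m m` for all `1 ≤ n ≤ m-1`, `1 ≤ m ≤ M`. -/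
theorem stmt_0 (M : ℕ) (hM : 1 ≤ M) (h : ℕ → ℕ → ℝ) (R : ℝ) (hR : 0 < R)
    (hpos : ∀ m ∈ Finset.Icc 1 M, ∀ n ∈ Finset.Icc 1 m, 0 < h m n)
    (hfeas : Feasible M h R (omaAlloc h R))
    (hopt : ∀ P, Feasible M h R P → totalPower M (omaAlloc h R) ≤ totalPower M P) :
    ∀ m ∈ Finset.Icc 1 M, ∀ n ∈ Finset.Icc 1 (m - 1), h m n ≤ h m m :=
  stmt_0_general M h R hR hpos hfeas hopt
end

section
/- Consider the two-user hybrid-NOMA power minimization problem: given h_{1,1}, h_{2,1}, h_{2,2} > 0 and R > 0, minimize P_{1,1} + P_{2,1} + P_{2,2} over nonnegative powers subject to log(1 + h_{1,1}P_{1,1}) ≥ R and log(1 + h_{2,1}P_{2,1}/(1 + h_{1,1}P_{1,1})) + log(1 + h_{2,2}P_{2,2}) ≥ R. Then the successive resource allocation solution is globally optimal: the optimal value of this problem equals (e^R − 1)/h_{1,1} plus the optimal value of the second-stage problem of minimizing P_{2,1} + P_{2,2} over P_{2,1}, P_{2,2} ≥ 0 subject to log(1 + e^{−R}h_{2,1}P_{2,1})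 + log(1 + h_{2,2}P_{2,2}) ≥ R; moreover, taking P_{1,1} = (e^R − 1)/h_{1,1} together with any global minimizer of the second-stage problem gives a global minimizer of the two-user problem. -/
/-- Feasibility for the two-user hybrid-NOMA power minimization problem. -/
noncomputable def Feas2U (h11 h21 h22 R p11 p21 p22 : ℝ) : Prop :=
  0 ≤ p11 ∧ 0 ≤ p21 ∧ 0 ≤ p22 ∧
  R ≤ Real.log (1 + h11 * p11) ∧
  R ≤ Real.log (1 + h21 * p21 / (1 + h11 * p11)) + Real.log (1 + h22 * p22)

/-- Feasibility for the second-stage problem (user 2's power minimization after user 1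
transmits at its OMA power). -/
noncomputable def FeasStage2 (a b R p1 p2 : ℝ) : Prop :=
  0 ≤ p1 ∧ 0 ≤ p2 ∧
  R ≤ Real.log (1 + Real.exp (-R) * a * p1) + Real.log (1 + b * p2)

/-!
User 1's rate constraint says exactly `P₁₁ ≥ P* := (e^R - 1)/h₁₁`, i.e. `1 + h₁₁P₁₁ ≥ e^R`. Since
`1 + h₁₁P₁₁` is the interference seen by user 2 in its first slot, raising `P₁₁` above `P*` only
shrinks user 2's rate; hence `(P₂₁, P₂₂)` of any feasible point is feasible for the second-stage
problem, whose constraint is user 2's at `P₁₁ = P*`. Conversely `P*` together with any second-stage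
feasible point is feasible. So every two-user objective value is at least `P*` plus a second-stage
value, with equality along `P₁₁ = P*`.
-/

open Real

theorem IsGLB.const_add_of_forall_exists_le {α : Type*} [AddCommGroup α] [PartialOrder α]
    [IsOrderedAddMonoid α] {S T : Set α} {c m : α} (hT : IsGLB T m)
    (hle : ∀ s ∈ S, ∃ t ∈ T, c + t ≤ s) (hmem : ∀ t ∈ T, c + t ∈ S) : IsGLB S (c + m) := by
  refine ⟨fun s hs => ?_, fun b hb => ?_⟩
  · obtain ⟨t, ht, hts⟩ := hle s hs
    exact (add_le_add_right (hT.1 ht) c).trans hts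
  · have hbT : b - c ∈ lowerBounds T := fun t ht => sub_le_iff_le_add'.2 (hb (hmem t ht))
    exact sub_le_iff_le_add'.1 (hT.2 hbT)

theorem one_add_mul_exp_sub_one_div {h : ℝ} (hh : h ≠ 0) (R : ℝ) :
    1 + h * ((exp R - 1) / h) = exp R := by
  field_simp
  ring

theorem exp_sub_one_div_le_of_le_log_one_add_mul {h R p : ℝ} (hh : 0 < h) (hp : 0 ≤ p)
    (hR : R ≤ log (1 + h * p)) : (exp R - 1) / h ≤ p := by
  have hexp : exp R ≤ 1 + h * p := (le_log_iff_exp_le (by positivity)).1 hR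
  rw [div_le_iff₀ hh]
  linarith

namespace Feas2U

variable {h11 h21 h22 R p11 p21 p22 : ℝ}

theorem exp_sub_one_div_le (h1 : 0 < h11) (hf : Feas2U h11 h21 h22 R p11 p21 p22) :
    (exp R - 1) / h11 ≤ p11 :=
  exp_sub_one_div_le_of_le_log_one_add_mul h1 hf.1 hf.2.2.2.1

theorem feasStage2 (h1 : 0 ≤ h11) (h2 : 0 ≤ h21) (hf : Feas2U h11 h21 h22 R p11 p21 p22) :
    FeasStage2 h21 h22 R p21 p22 := by
  obtain ⟨hp11, hp21, hp22, hrate1, hrate2⟩ := hf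
  refine ⟨hp21, hp22, hrate2.trans (add_le_add_left ?_ _)⟩
  have hpos : 0 < 1 + h11 * p11 := by positivity
  have hexp : exp R ≤ 1 + h11 * p11 := (le_log_iff_exp_le hpos).1 hrate1
  have hsinr : h21 * p21 / (1 + h11 * p11) ≤ exp (-R) * h21 * p21 := by
    rw [mul_assoc, exp_neg, ← div_eq_inv_mul]
    exact div_le_div_of_nonneg_left (by positivity) (exp_pos R) hexp
  exact log_le_log (by positivity) (by linarith)

end Feas2U

namespace FeasStage2

theorem feas2U {h11 h21 h22 R q1 q2 : ℝ} (h1 : 0 < h11) (hR : 0 ≤ R)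
    (hq : FeasStage2 h21 h22 R q1 q2) : Feas2U h11 h21 h22 R ((exp R - 1) / h11) q1 q2 := by
  obtain ⟨hq1, hq2, hrate⟩ := hq
  have hinterf := one_add_mul_exp_sub_one_div h1.ne' R
  refine ⟨div_nonneg (by linarith [add_one_le_exp R]) h1.le, hq1, hq2, ?_, ?_⟩
  · rw [hinterf, log_exp]
  · rwa [hinterf, div_eq_inv_mul, ← exp_neg, ← mul_assoc]

theorem exists_of_pos {a R : ℝ} (ha : 0 < a) (hR : 0 ≤ R) (b : ℝ) :
    ∃ p1 p2, FeasStage2 a b R p1 p2 := by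
  refine ⟨exp R * (exp R - 1) / a, 0, ?_, le_rfl, ?_⟩
  · have : 0 ≤ exp R - 1 := by linarith [add_one_le_exp R]
    positivity
  · have hsinr : exp (-R) * a * (exp R * (exp R - 1) / a) = exp R - 1 := by
      rw [exp_neg]
      field_simp
    rw [hsinr, mul_zero, add_zero, log_one, add_zero, add_sub_cancel, log_exp]

end FeasStage2

theorem stmt_3_general (h11 h21 h22 R : ℝ) (h1 : 0 < h11) (h2 : 0 < h21) (hR : 0 < R) :
    (sInf {v | ∃ p11 p21 p22, Feas2U h11 h21 h22 R p11 p21 p22 ∧ v = p11 + p21 + p22} =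
      (Real.exp R - 1) / h11 +
        sInf {v | ∃ p1 p2, FeasStage2 h21 h22 R p1 p2 ∧ v = p1 + p2}) ∧
    ∀ q1 q2, FeasStage2 h21 h22 R q1 q2 →
      (∀ p1 p2, FeasStage2 h21 h22 R p1 p2 → q1 + q2 ≤ p1 + p2) →
      Feas2U h11 h21 h22 R ((Real.exp R - 1) / h11) q1 q2 ∧
      ∀ p11 p21 p22, Feas2U h11 h21 h22 R p11 p21 p22 →
        (Real.exp R - 1) / h11 + q1 + q2 ≤ p11 + p21 + p22 := by
  set c := (exp R - 1) / h11
  set S2 := {v | ∃ p1 p2, FeasStage2 h21 h22 R p1 p2 ∧ v = p1 + p2}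
  obtain ⟨p1, p2, hp⟩ := FeasStage2.exists_of_pos h2 hR.le h22
  have hS2 : IsGLB S2 (sInf S2) := by
    refine isGLB_csInf ⟨_, p1, p2, hp, rfl⟩ ⟨0, ?_⟩
    rintro _ ⟨p1, p2, hp, rfl⟩
    exact add_nonneg hp.1 hp.2.1
  refine ⟨(hS2.const_add_of_forall_exists_le ?_ ?_).csInf_eq ⟨_, c, p1, p2, hp.feas2U h1 hR.le, rfl⟩,
    fun q1 q2 hq hqmin => ⟨hq.feas2U h1 hR.le, fun p11 p21 p22 hf => ?_⟩⟩
  · rintro _ ⟨p11, p21, p22, hf, rfl⟩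
    refine ⟨p21 + p22, ⟨p21, p22, hf.feasStage2 h1.le h2.le, rfl⟩, ?_⟩
    linarith [hf.exp_sub_one_div_le h1]
  · rintro _ ⟨p1, p2, hp, rfl⟩
    exact ⟨c, p1, p2, hp.feas2U h1 hR.le, by ring⟩
  · linarith [hf.exp_sub_one_div_le h1, hqmin p21 p22 (hf.feasStage2 h1.le h2.le)]

/-- In the two-user case, successive resource allocation is globally optimal: the optimal value
of the two-user problem equals `(e^R - 1)/h11` plus the optimal value of the second-stage
problem, and `P_{1,1} = (e^R - 1)/h11` together with any global minimizer of the second-stage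
problem is a global minimizer of the two-user problem. -/
theorem stmt_3 (h11 h21 h22 R : ℝ) (h1 : 0 < h11) (h2 : 0 < h21) (h3 : 0 < h22) (hR : 0 < R) :
    (sInf {v | ∃ p11 p21 p22, Feas2U h11 h21 h22 R p11 p21 p22 ∧ v = p11 + p21 + p22} =
      (Real.exp R - 1) / h11 +
        sInf {v | ∃ p1 p2, FeasStage2 h21 h22 R p1 p2 ∧ v = p1 + p2}) ∧
    ∀ q1 q2, FeasStage2 h21 h22 R q1 q2 →
      (∀ p1 p2, FeasStage2 h21 h22 R p1 p2 → q1 + q2 ≤ p1 + p2) →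
      Feas2U h11 h21 h22 R ((Real.exp R - 1) / h11) q1 q2 ∧
      ∀ p11 p21 p22, Feas2U h11 h21 h22 R p11 p21 p22 →
        (Real.exp R - 1) / h11 + q1 + q2 ≤ p11 + p21 + p22 :=
  stmt_3_general h11 h21 h22 R h1 h2 hR
end

section
/- Let a, b > 0 and R > 0, and consider the second-stage problem: minimize P₁ + P₂ over P₁, P₂ ≥ 0 subject to log(1 + e^{−R} a P₁) + log(1 + b P₂) ≥ R. If b ≥ a, then the pure OMA point (P₁, P₂) = (0, (e^R − 1)/b) is a global minimizer, and the optimal value is (e^R − 1)/b. -/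
/-- If `b ≥ a`, the pure OMA point `(0, (e^R - 1)/b)` is a global minimizer of the
second-stage problem, and the optimal value is `(e^R - 1)/b`. -/
theorem stmt_4 (a b R : ℝ) (ha : 0 < a) (hb : 0 < b) (hR : 0 < R) (hab : a ≤ b) :
    FeasStage2 a b R 0 ((Real.exp R - 1) / b) ∧
    (∀ p1 p2, FeasStage2 a b R p1 p2 → (Real.exp R - 1) / b ≤ p1 + p2) := by
  have hE1 : (1:ℝ) ≤ Real.exp R := by
    have := Real.add_one_le_exp R; linarith
  constructor
  · refine ⟨le_refl 0, ?_, ?_⟩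
    · apply div_nonneg (by linarith) hb.le
    · have : b * ((Real.exp R - 1) / b) = Real.exp R - 1 := by
        field_simp
      rw [this]
      simp only [mul_zero, add_zero, Real.log_one]
      rw [show (1 : ℝ) + (Real.exp R - 1) = Real.exp R by ring, Real.log_exp]
      linarith
  · intro p1 p2 ⟨hp1, hp2, hcon⟩
    set u := Real.exp (-R) * a * p1 with hu_def
    set v := b * p2 with hv_def
    have hu : 0 ≤ u := by positivity
    have hv : 0 ≤ v := by positivity
    have h1u : (0:ℝ) < 1 + u := by linarith
    have h1v : (0:ℝ) < 1 + v := by linarith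
    have hprod : Real.exp R ≤ (1 + u) * (1 + v) := by
      have := Real.exp_le_exp.mpr hcon
      rwa [Real.exp_add, Real.exp_log h1u, Real.exp_log h1v] at this
    -- key: e^R - 1 ≤ u * e^R + v
    have hkey : Real.exp R - 1 ≤ u * Real.exp R + v := by
      nlinarith [sq_nonneg u, Real.exp_pos R, mul_nonneg hu hv]
    -- b * p1 ≥ a * p1 = u * e^R
    have hbp1 : u * Real.exp R ≤ b * p1 := by
      have : u * Real.exp R = a * p1 := by
        rw [hu_def]; rw [mul_comm (Real.exp (-R) * a * p1)]
        rw [← mul_assoc, ← mul_assoc, ← Real.exp_add]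
        simp
      rw [this]
      exact mul_le_mul_of_nonneg_right hab hp1
    have : Real.exp R - 1 ≤ b * (p1 + p2) := by
      have : b * (p1 + p2) = b * p1 + v := by rw [hv_def]; ring
      rw [this]; linarith
    rw [div_le_iff₀ hb]
    linarith [this]
end

section
/- Let a, b > 0 and R > 0, and consider the second-stage problem: minimize P₁ + P₂ over P₁, P₂ ≥ 0 subject to log(1 + e^{−R} a P₁) + log(1 + b P₂) ≥ R. If b ≤ e^{−2R} a, then the pure NOMA point (P₁, P₂) = (e^R(e^R − 1)/a, 0) is a global minimizer, and the optimal value is e^R(e^R − 1)/a. -/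
/-!
With `x = e^{-R} a P₁` and `y = b P₂` the rate constraint reads `e^R ≤ (1 + x)(1 + y)`, and this
forces `e^R - 1 ≤ x + e^R y`. Since `e^{2R} b ≤ a`, the cost satisfies
`a (P₁ + P₂) ≥ e^R x + e^{2R} y = e^R (x + e^R y) ≥ e^R (e^R - 1)`, with equality at `y = 0`.
-/

open Real

lemma sub_one_le_add_mul_of_le_one_add_mul_one_add {c x y : ℝ} (hc : 0 ≤ c) (hy : 0 ≤ y)
    (h : c ≤ (1 + x) * (1 + y)) : c - 1 ≤ x + c * y := by
  rcases le_or_gt (c - 1) x with hx | hx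
  · nlinarith [mul_nonneg hc hy]
  · nlinarith [mul_nonneg (sub_nonneg.2 hx.le) hy]

lemma FeasStage2.exp_le_mul {a b R p1 p2 : ℝ} (ha : 0 ≤ a) (hb : 0 ≤ b)
    (h : FeasStage2 a b R p1 p2) : exp R ≤ (1 + exp (-R) * a * p1) * (1 + b * p2) := by
  obtain ⟨hp1, hp2, hrate⟩ := h
  have hx : 0 < 1 + exp (-R) * a * p1 := by positivity
  have hy : 0 < 1 + b * p2 := by positivity
  rwa [← log_mul hx.ne' hy.ne', le_log_iff_exp_le (mul_pos hx hy)] at hrate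

lemma FeasStage2.exp_mul_exp_sub_one_div_le_add {a b R p1 p2 : ℝ} (ha : 0 < a) (hb : 0 ≤ b)
    (hba : b ≤ exp (-(2 * R)) * a) (h : FeasStage2 a b R p1 p2) :
    exp R * (exp R - 1) / a ≤ p1 + p2 := by
  have hE : 0 < exp R := exp_pos R
  have hp2 : 0 ≤ p2 := h.2.1
  have hsum : exp R - 1 ≤ exp (-R) * a * p1 + exp R * (b * p2) :=
    sub_one_le_add_mul_of_le_one_add_mul_one_add hE.le (mul_nonneg hb hp2) (h.exp_le_mul ha.le hb)
  have hp1 : exp R * (exp (-R) * a * p1) = a * p1 := by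
    rw [exp_neg]; field_simp
  have hEb : exp R * exp R * b ≤ a := by
    rwa [exp_neg, two_mul, exp_add, le_inv_mul_iff₀ (by positivity)] at hba
  rw [div_le_iff₀ ha]
  calc exp R * (exp R - 1)
      ≤ exp R * (exp (-R) * a * p1 + exp R * (b * p2)) := mul_le_mul_of_nonneg_left hsum hE.le
    _ = a * p1 + exp R * exp R * b * p2 := by rw [mul_add, hp1]; ring
    _ ≤ a * p1 + a * p2 := by gcongr
    _ = (p1 + p2) * a := by ring

lemma feasStage2_noma {a b R : ℝ} (ha : 0 < a) (hR : 0 ≤ R) :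
    FeasStage2 a b R (exp R * (exp R - 1) / a) 0 := by
  have hE : 1 ≤ exp R := one_le_exp hR
  refine ⟨div_nonneg (mul_nonneg (exp_pos R).le (sub_nonneg.2 hE)) ha.le, le_rfl, ?_⟩
  have hx : exp (-R) * a * (exp R * (exp R - 1) / a) = exp R - 1 := by
    rw [exp_neg]; field_simp
  rw [hx, mul_zero, add_zero, log_one, add_zero, add_sub_cancel, log_exp]

/-- If `b ≤ e^{-2R} a`, the pure NOMA point `(e^R (e^R - 1)/a, 0)` is a global minimizer of
the second-stage problem, and the optimal value is `e^R (e^R - 1)/a`. -/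
theorem stmt_5 (a b R : ℝ) (ha : 0 < a) (hb : 0 < b) (hR : 0 < R)
    (hba : b ≤ Real.exp (-(2 * R)) * a) :
    FeasStage2 a b R (Real.exp R * (Real.exp R - 1) / a) 0 ∧
    (∀ p1 p2, FeasStage2 a b R p1 p2 → Real.exp R * (Real.exp R - 1) / a ≤ p1 + p2) :=
  ⟨feasStage2_noma ha hR.le, fun _ _ h => h.exp_mul_exp_sub_one_div_le_add ha hb.le hba⟩
end

section
/- Let a, b > 0 and R > 0, and consider the second-stage problem: minimize P₁ + P₂ over P₁, P₂ ≥ 0 subject to log(1 + e^{−R} a P₁) + log(1 + b P₂) ≥ R. If e^{−2R} ≤ b/a < 1, then the hybrid NOMA point P₁ = e^R/√(ab) − e^R/a, P₂ = e^R/√(ab) − 1/b is feasible (both coordinates are nonnegative and the rate constraint holds with equality) and is a global minimizer; the optimal value is 2e^R/√(ab) − e^R/a − 1/b. -/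
/-!
Writing `x = 1 + e^{-R} a P₁` and `y = 1 + b P₂`, the rate constraint reads `e^R ≤ x y` and
the objective is `(e^R/a) x + (1/b) y - e^R/a - 1/b`. By AM–GM the weighted sum is at least
`2 √((e^R/a)(1/b) e^R) = 2 e^R/√(ab)`, with equality when `(e^R/a) x = (1/b) y` and `x y = e^R`,
which is the hybrid NOMA point. Its coordinates are nonnegative exactly when
`√(ab) ≤ a` and `√(ab) ≤ b e^R`, i.e. when `e^{-2R} ≤ b/a ≤ 1`.
-/

open Real

lemma two_mul_sqrt_le_add_of_le_mul {α β K x y : ℝ} (hα : 0 ≤ α) (hβ : 0 ≤ β)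
    (hx : 0 ≤ x) (hy : 0 ≤ y) (hK : K ≤ x * y) :
    2 * √(α * β * K) ≤ α * x + β * y := by
  have hαx : 0 ≤ α * x := mul_nonneg hα hx
  have hβy : 0 ≤ β * y := mul_nonneg hβ hy
  calc 2 * √(α * β * K) ≤ 2 * (√(α * x) * √(β * y)) := by
        rw [← sqrt_mul hαx]
        refine mul_le_mul_of_nonneg_left (sqrt_le_sqrt ?_) zero_le_two
        nlinarith [mul_le_mul_of_nonneg_left hK (mul_nonneg hα hβ)]
    _ ≤ √(α * x) ^ 2 + √(β * y) ^ 2 := by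
        rw [← mul_assoc]; exact two_mul_le_add_sq _ _
    _ = α * x + β * y := by rw [sq_sqrt hαx, sq_sqrt hβy]

namespace FeasStage2

variable {a b R p1 p2 : ℝ}

lemma exp_le_mul_s6 (ha : 0 ≤ a) (hb : 0 ≤ b) (h : FeasStage2 a b R p1 p2) :
    exp R ≤ (1 + exp (-R) * a * p1) * (1 + b * p2) := by
  obtain ⟨hp1, hp2, hrate⟩ := h
  have hx : 0 < 1 + exp (-R) * a * p1 := by positivity
  have hy : 0 < 1 + b * p2 := by positivity
  rwa [← log_mul hx.ne' hy.ne', le_log_iff_exp_le (mul_pos hx hy)] at hrate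

lemma lower_bound (ha : 0 < a) (hb : 0 < b) (h : FeasStage2 a b R p1 p2) :
    2 * exp R / √(a * b) - exp R / a - 1 / b ≤ p1 + p2 := by
  have hp1 := h.1
  have hp2 := h.2.1
  have amgm := two_mul_sqrt_le_add_of_le_mul (α := exp R / a) (β := 1 / b)
    (by positivity) (by positivity) (by positivity) (by positivity) (h.exp_le_mul_s6 ha.le hb.le)
  have hsqrt : √(exp R / a * (1 / b) * exp R) = exp R / √(a * b) := by
    rw [show exp R / a * (1 / b) * exp R = exp R ^ 2 / (a * b) by field_simp,
      sqrt_div' _ (mul_pos ha hb).le, sqrt_sq (exp_pos R).le]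
  have hsum : exp R / a * (1 + exp (-R) * a * p1) + 1 / b * (1 + b * p2)
      = p1 + p2 + exp R / a + 1 / b := by
    rw [exp_neg]; field_simp; ring
  rw [hsqrt, hsum, ← mul_div_assoc] at amgm
  linarith

end FeasStage2

lemma log_rate_at_hybrid_point {a b : ℝ} (ha : 0 < a) (hb : 0 < b) (R : ℝ) :
    log (1 + exp (-R) * a * (exp R / √(a * b) - exp R / a)) +
      log (1 + b * (exp R / √(a * b) - 1 / b)) = R := by
  have hs : 0 < √(a * b) := sqrt_pos.2 (mul_pos ha hb)
  have hx : 1 + exp (-R) * a * (exp R / √(a * b) - exp R / a) = a / √(a * b) := by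
    rw [exp_neg]; field_simp; ring
  have hy : 1 + b * (exp R / √(a * b) - 1 / b) = b * exp R / √(a * b) := by
    field_simp; ring
  have hxy : a / √(a * b) * (b * exp R / √(a * b)) = exp R := by
    rw [div_mul_div_comm, mul_self_sqrt (mul_pos ha hb).le]
    field_simp
  rw [hx, hy, ← log_mul (by positivity) (by positivity), hxy, log_exp]

theorem stmt_6_general (a b R : ℝ) (ha : 0 < a) (hb : 0 < b)
    (hlb : Real.exp (-(2 * R)) ≤ b / a) (hub : b / a < 1) :
    0 ≤ Real.exp R / Real.sqrt (a * b) - Real.exp R / a ∧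
    0 ≤ Real.exp R / Real.sqrt (a * b) - 1 / b ∧
    Real.log (1 + Real.exp (-R) * a * (Real.exp R / Real.sqrt (a * b) - Real.exp R / a)) +
      Real.log (1 + b * (Real.exp R / Real.sqrt (a * b) - 1 / b)) = R ∧
    (∀ p1 p2, FeasStage2 a b R p1 p2 →
      2 * Real.exp R / Real.sqrt (a * b) - Real.exp R / a - 1 / b ≤ p1 + p2) := by
  have hs : 0 < √(a * b) := sqrt_pos.2 (mul_pos ha hb)
  have hba : b ≤ a := ((div_lt_one ha).1 hub).le
  have habE : a ≤ b * exp R ^ 2 := by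
    rw [exp_neg, two_mul, exp_add, le_div_iff₀ ha, inv_mul_le_iff₀ (by positivity)] at hlb
    linarith
  have hs_le_a : √(a * b) ≤ a := (sqrt_le_left ha.le).2 (by nlinarith)
  have hs_le_bE : √(a * b) ≤ b * exp R := (sqrt_le_left (by positivity)).2 (by nlinarith)
  refine ⟨sub_nonneg.2 ?_, sub_nonneg.2 ?_, ?_, fun p1 p2 h ↦ h.lower_bound ha hb⟩
  · exact div_le_div_of_nonneg_left (exp_pos R).le hs hs_le_a
  · rw [div_le_div_iff₀ hb hs]; linarith
  · exact log_rate_at_hybrid_point ha hb R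

/-- If `e^{-2R} ≤ b/a < 1`, the hybrid NOMA point
`P₁ = e^R/√(ab) - e^R/a`, `P₂ = e^R/√(ab) - 1/b` is feasible (both coordinates nonnegative,
rate constraint with equality) and is a global minimizer of the second-stage problem;
the optimal value is `2e^R/√(ab) - e^R/a - 1/b`. -/
theorem stmt_6 (a b R : ℝ) (ha : 0 < a) (hb : 0 < b) (hR : 0 < R)
    (hlb : Real.exp (-(2 * R)) ≤ b / a) (hub : b / a < 1) :
    0 ≤ Real.exp R / Real.sqrt (a * b) - Real.exp R / a ∧
    0 ≤ Real.exp R / Real.sqrt (a * b) - 1 / b ∧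
    Real.log (1 + Real.exp (-R) * a * (Real.exp R / Real.sqrt (a * b) - Real.exp R / a)) +
      Real.log (1 + b * (Real.exp R / Real.sqrt (a * b) - 1 / b)) = R ∧
    (∀ p1 p2, FeasStage2 a b R p1 p2 →
      2 * Real.exp R / Real.sqrt (a * b) - Real.exp R / a - 1 / b ≤ p1 + p2) :=
  stmt_6_general a b R ha hb hlb hub
end

section
/- Let h_{1,1}, h_{2,1}, h_{2,2} > 0 and R > 0, and define W(a,b) = (e^R − 1)/b if b ≥ a; W(a,b) = e^R(e^R − 1)/a if b ≤ e^{−2R}a; and W(a,b) = 2e^R/√(ab) − e^R/a − 1/b if e^{−2R}a < b < a. Then the optimal value of the two-user hybrid-NOMA power minimization problem (minimize P_{1,1} + P_{2,1} + P_{2,2} over nonnegative powers subject to log(1 + h_{1,1}P_{1,1}) ≥ R and log(1 + h_{2,1}P_{2,1}/(1 + h_{1,1}P_{1,1})) + log(1 + h_{2,2}P_{2,2}) ≥ R) equals (e^R − 1)/h_{1,1} + W(h_{2,1}, h_{2,2}). -/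
/-- User 2's minimal total transmit power as a function of its channel gains `a = h_{2,1}`,
`b = h_{2,2}`: pure OMA if `b ≥ a`, pure NOMA if `b ≤ e^{-2R} a`, hybrid NOMA otherwise. -/
noncomputable def W (R a b : ℝ) : ℝ :=
  if a ≤ b then (Real.exp R - 1) / b
  else if b ≤ Real.exp (-(2 * R)) * a then Real.exp R * (Real.exp R - 1) / a
  else 2 * Real.exp R / Real.sqrt (a * b) - Real.exp R / a - 1 / b

/-!
User 1 needs `1 + h₁₁ p₁₁ ≥ e^R`, and any power beyond that only adds interference for user 2,
so at the optimum `p₁₁ = (e^R - 1)/h₁₁` and user 2 has to minimize `x + y` subject to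
`x, y ≥ 0` and `(1 + a x)(1 + b y) ≥ K`, where `K = e^R`, `a = h₂₁/e^R`, `b = h₂₂`.
Since `x + y = (x + 1/a) + (y + 1/b) - 1/a - 1/b`, AM-GM bounds it below by
`2√(K/(ab)) - 1/a - 1/b`, with equality at `x + 1/a = y + 1/b = √(K/(ab))`. That point is
feasible exactly when `b < K a` and `a < K b`; otherwise the whole budget goes to one channel.
-/

open Real

noncomputable def minSumPower (K a b : ℝ) : ℝ :=
  if K * a ≤ b then (K - 1) / b
  else if K * b ≤ a then (K - 1) / a
  else 2 * √(K / (a * b)) - 1 / a - 1 / b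

lemma sub_one_le_mul_add {K a b x y : ℝ} (hb : 0 < b) (hx : 0 ≤ x) (hy : 0 ≤ y)
    (hK : K * a ≤ b) (h : K ≤ (1 + a * x) * (1 + b * y)) :
    K - 1 ≤ b * (x + y) := by
  rcases le_or_gt K 1 with hK1 | hK1
  · nlinarith [mul_nonneg hb.le (add_nonneg hx hy)]
  have : K * a * x ≤ b * x := mul_le_mul_of_nonneg_right hK hx
  nlinarith [sq_nonneg (K - 1 - b * y), mul_nonneg hy hb.le, mul_nonneg hx hb.le,
    mul_nonneg (mul_nonneg hy hb.le) (mul_nonneg hx hb.le)]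

lemma two_sqrt_sub_le_add {K a b x y : ℝ} (ha : 0 < a) (hb : 0 < b)
    (hx : 0 ≤ 1 + a * x) (hy : 0 ≤ 1 + b * y) (h : K ≤ (1 + a * x) * (1 + b * y)) :
    2 * √(K / (a * b)) - 1 / a - 1 / b ≤ x + y := by
  set p := (1 + a * x) / a
  set q := (1 + b * y) / b
  have hp : 0 ≤ p := by positivity
  have hq : 0 ≤ q := by positivity
  have h_sqrt : √(K / (a * b)) ≤ √p * √q := by
    rw [← sqrt_mul hp, div_mul_div_comm]
    gcongr
  have amgm : 2 * (√p * √q) ≤ p + q := by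
    nlinarith [sq_nonneg (√p - √q), sq_sqrt hp, sq_sqrt hq]
  have hpq : p + q = x + y + 1 / a + 1 / b := by
    simp only [p, q]
    field_simp
    ring
  linarith

lemma minSumPower_le_add {K a b x y : ℝ} (ha : 0 < a) (hb : 0 < b) (hx : 0 ≤ x) (hy : 0 ≤ y)
    (h : K ≤ (1 + a * x) * (1 + b * y)) :
    minSumPower K a b ≤ x + y := by
  unfold minSumPower
  split_ifs with hab hba
  · rw [div_le_iff₀ hb]
    linarith [sub_one_le_mul_add hb hx hy hab h]
  · rw [div_le_iff₀ ha]
    linarith [sub_one_le_mul_add ha hy hx hba (by linarith)]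
  · exact two_sqrt_sub_le_add ha hb (by positivity) (by positivity) h

lemma exists_minSumPower_eq {K a b : ℝ} (hK : 1 ≤ K) (ha : 0 < a) (hb : 0 < b) :
    ∃ x y, 0 ≤ x ∧ 0 ≤ y ∧ (1 + a * x) * (1 + b * y) = K ∧ x + y = minSumPower K a b := by
  unfold minSumPower
  split_ifs with hab hba
  · refine ⟨0, (K - 1) / b, le_rfl, div_nonneg (by linarith) hb.le, ?_, by ring⟩
    field_simp
    ring
  · refine ⟨(K - 1) / a, 0, div_nonneg (by linarith) ha.le, le_rfl, ?_, by ring⟩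
    field_simp
    ring
  · push Not at hab hba
    set s := √(K / (a * b))
    have hs : s ^ 2 = K / (a * b) := sq_sqrt (by positivity)
    have inv_le_s {c d : ℝ} (hc : 0 < c) (hcd : d < K * c) (hab : a * b = c * d) : 1 / c ≤ s := by
      refine le_sqrt_of_sq_le ?_
      rw [div_pow, one_pow, div_le_div_iff₀ (by positivity) (by positivity), hab]
      nlinarith [mul_lt_mul_of_pos_left hcd hc]
    refine ⟨s - 1 / a, s - 1 / b, sub_nonneg.2 (inv_le_s ha hab rfl),
      sub_nonneg.2 (inv_le_s hb hba (mul_comm a b)), ?_, by ring⟩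
    calc (1 + a * (s - 1 / a)) * (1 + b * (s - 1 / b)) = a * b * s ^ 2 := by field_simp; ring
      _ = K := by rw [hs]; field_simp

lemma feas2U_iff {h11 h21 h22 R p11 p21 p22 : ℝ} (h1 : 0 ≤ h11) (h2 : 0 ≤ h21) (h3 : 0 ≤ h22) :
    Feas2U h11 h21 h22 R p11 p21 p22 ↔ 0 ≤ p11 ∧ 0 ≤ p21 ∧ 0 ≤ p22 ∧
      exp R ≤ 1 + h11 * p11 ∧ exp R ≤ (1 + h21 * p21 / (1 + h11 * p11)) * (1 + h22 * p22) := by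
  unfold Feas2U
  refine and_congr_right fun hp11 ↦ and_congr_right fun hp21 ↦ and_congr_right fun hp22 ↦ ?_
  rw [← log_mul (by positivity) (by positivity), le_log_iff_exp_le (by positivity),
    le_log_iff_exp_le (by positivity)]

lemma W_eq_minSumPower (R : ℝ) {a : ℝ} (ha : 0 < a) (b : ℝ) :
    W R a b = minSumPower (exp R) (a / exp R) b := by
  have hE := exp_pos R
  have hcond₁ : exp R * (a / exp R) ≤ b ↔ a ≤ b := by rw [mul_div_cancel₀ _ hE.ne']
  have hcond₂ : exp R * b ≤ a / exp R ↔ b ≤ exp (-(2 * R)) * a := by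
    rw [le_div_iff₀ hE, exp_neg, two_mul, exp_add, ← div_eq_inv_mul, le_div_iff₀ (by positivity)]
    ring_nf
  have hsqrt : √(exp R / (a / exp R * b)) = exp R / √(a * b) := by
    rw [show exp R / (a / exp R * b) = exp R ^ 2 / (a * b) by field_simp,
      sqrt_div (by positivity), sqrt_sq hE.le]
  unfold W minSumPower
  simp only [hcond₁, hcond₂, hsqrt]
  split_ifs <;> field_simp

/-- The optimal value of the two-user hybrid-NOMA power minimization problem equals
`(e^R - 1)/h11 + W(h21, h22)`. -/
theorem stmt_7 (h11 h21 h22 R : ℝ) (h1 : 0 < h11) (h2 : 0 < h21) (h3 : 0 < h22) (hR : 0 < R) :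
    sInf {v | ∃ p11 p21 p22, Feas2U h11 h21 h22 R p11 p21 p22 ∧ v = p11 + p21 + p22} =
      (Real.exp R - 1) / h11 + W R h21 h22 := by
  have hE : 1 ≤ exp R := one_le_exp hR.le
  have h_user1 : 1 + h11 * ((exp R - 1) / h11) = exp R := by field_simp; ring
  rw [W_eq_minSumPower R h2]
  refine IsLeast.csInf_eq ⟨?_, ?_⟩
  · obtain ⟨x, y, hx, hy, hxy, hsum⟩ := exists_minSumPower_eq hE (div_pos h2 (exp_pos R)) h3
    refine ⟨(exp R - 1) / h11, x, y, (feas2U_iff h1.le h2.le h3.le).2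
      ⟨by positivity, hx, hy, h_user1.ge, ?_⟩, by rw [← hsum]; ring⟩
    rw [h_user1, ← div_mul_eq_mul_div]
    exact hxy.ge
  · rintro v ⟨p11, p21, p22, hf, rfl⟩
    obtain ⟨-, hp21, hp22, hu1, hu2⟩ := (feas2U_iff h1.le h2.le h3.le).1 hf
    have hp11 : (exp R - 1) / h11 ≤ p11 := by rw [div_le_iff₀ h1]; linarith
    have h_interference : h21 * p21 / (1 + h11 * p11) ≤ h21 / exp R * p21 := by
      rw [div_mul_eq_mul_div]
      gcongr
    have h_user2 :=
      minSumPower_le_add (div_pos h2 (exp_pos R)) h3 hp21 hp22 (hu2.trans (by gcongr))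
    linarith
end

section
/- Let X and Y be independent random variables, each exponentially distributed with rate 1, let R > 0 and ρ > 0. Then P(e^{2R} Y ≤ X ≤ e^R(e^R − 1)/ρ) = (1/(1 + e^{2R}))·(1 − e^{−(1+e^{2R})·e^{−R}(e^R−1)/ρ}) − e^{−e^R(e^R−1)/ρ}·(1 − e^{−e^{−R}(e^R−1)/ρ}). -/
/-!
Condition on `Y = y`. For `y ≥ 0` the exponential law gives `P(a y ≤ X ≤ b) = e^{-a y} - e^{-b}`,
which is positive exactly for `y ≤ b / a`, so with `a = e^{2R}` and `b = e^R (e^R - 1) / ρ` the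
probability is the elementary integral `∫_0^{b/a} e^{-y} (e^{-a y} - e^{-b}) dy`, where
`b / a = e^{-R} (e^R - 1) / ρ`.
-/

open MeasureTheory ProbabilityTheory Set

open scoped ENNReal

namespace ProbabilityTheory

theorem IndepFun.measure_preimage_prodMk {Ω α β : Type*} [MeasurableSpace Ω] [MeasurableSpace α]
    [MeasurableSpace β] {μ : Measure Ω} [IsFiniteMeasure μ] {X : Ω → α} {Y : Ω → β}
    (hXY : IndepFun X Y μ) (hX : Measurable X) (hY : Measurable Y) {S : Set (α × β)}
    (hS : MeasurableSet S) :
    μ ((fun ω ↦ (X ω, Y ω)) ⁻¹' S) = ((μ.map X).prod (μ.map Y)) S := by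
  rw [← hXY.map_prod_eq_prod_map_map hX.aemeasurable hY.aemeasurable,
    Measure.map_apply (hX.prodMk hY) hS]

instance nullSingletonClass_expMeasure (r : ℝ) : NullSingletonClass (expMeasure r) :=
  nullSingletonClass_withDensity _

lemma expMeasure_Icc {r s t : ℝ} (hr : 0 < r) (hs : 0 ≤ s) :
    expMeasure r (Icc s t) = ENNReal.ofReal (Real.exp (-(r * s)) - Real.exp (-(r * t))) := by
  have := isProbabilityMeasure_expMeasure hr
  rcases le_or_gt s t with hst | hts
  · rw [← measure_congr Ioc_ae_eq_Icc, ← measure_cdf (expMeasure r),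
      StieltjesFunction.measure_Ioc, cdf_expMeasure_eq hr, cdf_expMeasure_eq hr,
      if_pos (hs.trans hst), if_pos hs]
    ring_nf
  · have hexp : Real.exp (-(r * s)) ≤ Real.exp (-(r * t)) := by gcongr
    rw [Icc_eq_empty hts.not_ge, measure_empty, ENNReal.ofReal_of_nonpos (by linarith)]

lemma exponentialPDF_one_mul_expMeasure_Icc {a : ℝ} (ha : 0 < a) (b y : ℝ) :
    exponentialPDF 1 y * expMeasure 1 (Icc (a * y) b) =
      (Icc 0 (b / a)).indicator
        (fun y ↦ ENNReal.ofReal (Real.exp (-y) * (Real.exp (-(a * y)) - Real.exp (-b)))) y := by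
  rcases lt_or_ge y 0 with hy | hy
  · rw [exponentialPDF_of_neg hy, zero_mul, indicator_of_notMem fun h ↦ hy.not_ge h.1]
  rw [exponentialPDF_of_nonneg hy, expMeasure_Icc one_pos (by positivity)]
  simp only [one_mul]
  rw [← ENNReal.ofReal_mul (Real.exp_pos _).le]
  rcases le_or_gt y (b / a) with hyb | hyb
  · rw [indicator_of_mem (mem_Icc.mpr ⟨hy, hyb⟩)]
  · have hexp : Real.exp (-(a * y)) < Real.exp (-b) := by
      rw [div_lt_iff₀ ha] at hyb
      gcongr
      linarith
    rw [indicator_of_notMem fun h ↦ hyb.not_ge h.2,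
      ENNReal.ofReal_of_nonpos (mul_nonpos_of_nonneg_of_nonpos (Real.exp_pos _).le (by linarith))]

lemma integral_exp_neg_mul_exp_neg_mul_sub {a : ℝ} (ha : 1 + a ≠ 0) (b c : ℝ) :
    ∫ y in (0 : ℝ)..c, Real.exp (-y) * (Real.exp (-(a * y)) - Real.exp (-b)) =
      1 / (1 + a) * (1 - Real.exp (-((1 + a) * c))) - Real.exp (-b) * (1 - Real.exp (-c)) := by
  have hderiv (y : ℝ) : HasDerivAt
      (fun y ↦ Real.exp (-b) * Real.exp (-y) - Real.exp (-((1 + a) * y)) / (1 + a))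
      (Real.exp (-y) * (Real.exp (-(a * y)) - Real.exp (-b))) y := by
    have h1 : HasDerivAt (fun y ↦ Real.exp (-y)) (-Real.exp (-y)) y := by
      simpa using (hasDerivAt_neg y).exp
    have h2 : HasDerivAt (fun y ↦ Real.exp (-((1 + a) * y)))
        (-(1 + a) * Real.exp (-((1 + a) * y))) y := by
      simpa [mul_comm] using ((hasDerivAt_id y).const_mul (1 + a)).neg.exp
    refine ((h1.const_mul _).sub (h2.div_const _)).congr_deriv ?_
    have hsplit : Real.exp (-((1 + a) * y)) = Real.exp (-y) * Real.exp (-(a * y)) := by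
      rw [← Real.exp_add]; ring_nf
    rw [hsplit]
    field_simp
    ring
  rw [intervalIntegral.integral_eq_sub_of_hasDerivAt (fun y _ ↦ hderiv y)
    (Continuous.intervalIntegrable (by fun_prop) _ _)]
  simp only [neg_zero, mul_zero, Real.exp_zero]
  ring

lemma measurableSet_setOf_mul_snd_le_fst_le (a b : ℝ) :
    MeasurableSet {p : ℝ × ℝ | a * p.2 ≤ p.1 ∧ p.1 ≤ b} :=
  (measurableSet_le (measurable_snd.const_mul a) measurable_fst).inter
    (measurableSet_le measurable_fst measurable_const)

lemma expMeasure_prod_setOf_mul_snd_le_fst_le {a b : ℝ} (ha : 0 < a) (hb : 0 ≤ b) :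
    ((expMeasure 1).prod (expMeasure 1)) {p | a * p.2 ≤ p.1 ∧ p.1 ≤ b} =
      ENNReal.ofReal (1 / (1 + a) * (1 - Real.exp (-((1 + a) * (b / a)))) -
        Real.exp (-b) * (1 - Real.exp (-(b / a)))) := by
  have := isProbabilityMeasure_expMeasure one_pos
  have hS := measurableSet_setOf_mul_snd_le_fst_le a b
  have hpdf : Measurable (exponentialPDF 1) := (measurable_exponentialPDFReal 1).ennreal_ofReal
  have hnonneg : 0 ≤ᵐ[volume.restrict (Icc 0 (b / a))]
      fun y ↦ Real.exp (-y) * (Real.exp (-(a * y)) - Real.exp (-b)) := by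
    filter_upwards [ae_restrict_mem measurableSet_Icc] with y hy
    have hay : a * y ≤ b := by rw [← le_div_iff₀' ha]; exact hy.2
    have hexp : Real.exp (-b) ≤ Real.exp (-(a * y)) := by gcongr
    exact mul_nonneg (Real.exp_pos _).le (by linarith)
  rw [Measure.prod_apply_symm hS]
  change ∫⁻ y, _ ∂(volume.withDensity (exponentialPDF 1)) = _
  rw [lintegral_withDensity_eq_lintegral_mul _ hpdf (measurable_measure_prodMk_right hS)]
  change ∫⁻ y, exponentialPDF 1 y * expMeasure 1 (Icc (a * y) b) = _
  simp_rw [exponentialPDF_one_mul_expMeasure_Icc ha b]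
  rw [lintegral_indicator measurableSet_Icc, ← ofReal_integral_eq_lintegral_ofReal
    (Continuous.integrableOn_Icc (by fun_prop)) hnonneg, integral_Icc_eq_integral_Ioc,
    ← intervalIntegral.integral_of_le (div_nonneg hb ha.le),
    integral_exp_neg_mul_exp_neg_mul_sub (by positivity)]

end ProbabilityTheory

/-- The pure-NOMA power outage probability in the two-user case: if `X = h_{2,1}` and
`Y = h_{2,2}` are i.i.d. rate-1 exponential channel gains, then
`P(e^{2R} Y ≤ X ≤ e^R(e^R - 1)/ρ)` equals the displayed closed form. -/
theorem stmt_8 {Ω : Type*} [MeasurableSpace Ω] (μ : Measure Ω) [IsProbabilityMeasure μ]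
    (X Y : Ω → ℝ) (hX : Measurable X) (hY : Measurable Y) (hXY : IndepFun X Y μ)
    (hXd : μ.map X = expMeasure 1) (hYd : μ.map Y = expMeasure 1)
    (R ρ : ℝ) (hR : 0 < R) (hρ : 0 < ρ) :
    μ {ω | Real.exp (2 * R) * Y ω ≤ X ω ∧
           X ω ≤ Real.exp R * (Real.exp R - 1) / ρ} =
      ENNReal.ofReal
        (1 / (1 + Real.exp (2 * R)) *
            (1 - Real.exp (-((1 + Real.exp (2 * R)) *
              (Real.exp (-R) * (Real.exp R - 1) / ρ)))) -
          Real.exp (-(Real.exp R * (Real.exp R - 1) / ρ)) *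
            (1 - Real.exp (-(Real.exp (-R) * (Real.exp R - 1) / ρ)))) := by
  have hb : 0 ≤ Real.exp R * (Real.exp R - 1) / ρ := by
    have hexp : 1 ≤ Real.exp R := Real.one_le_exp hR.le
    positivity
  have hba : Real.exp (-R) * (Real.exp R - 1) / ρ =
      Real.exp R * (Real.exp R - 1) / ρ / Real.exp (2 * R) := by
    rw [two_mul, Real.exp_add, Real.exp_neg]
    field_simp
  rw [hba, ← expMeasure_prod_setOf_mul_snd_le_fst_le (Real.exp_pos _) hb]
  exact (hXY.measure_preimage_prodMk hX hY (measurableSet_setOf_mul_snd_le_fst_le _ _)).trans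
    (by rw [hXd, hYd])
end

section
/- Let X and Y be independent random variables, each exponentially distributed with rate 1, and let R > 0. Then lim_{ρ→∞} ρ² · P(e^{2R} Y ≤ X ≤ e^R(e^R − 1)/ρ) = (e^R − 1)²/2. -/
/-!
By independence, `P(a Y ≤ X ≤ t) = ∫₀ᵗ e^{-x} (1 - e^{-x/a}) dx = (1 - e^{-t}) - b⁻¹ (1 - e^{-b t})`
with `b = 1 + a⁻¹`. The constant and linear Taylor terms of this expression at `t = 0` cancel, so it
equals `(b - 1) t² / 2 = t² / (2a)` up to `O(t³)`. With `a = e^{2R}` and `t = c / ρ`,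
`c = e^R (e^R - 1)`, this gives `ρ² P → c² / (2a) = (e^R - 1)² / 2`.
-/

open MeasureTheory ProbabilityTheory Filter Real Set Topology

lemma integral_mul_exp_neg_mul (r t : ℝ) :
    ∫ x in (0 : ℝ)..t, r * exp (-(r * x)) = 1 - exp (-(r * t)) := by
  rw [intervalIntegral.integral_eq_sub_of_hasDerivAt (fun x _ => hasDerivAt_neg_exp_mul_exp)
    ((by fun_prop : Continuous fun x => r * exp (-(r * x))).intervalIntegrable _ _)]
  simp only [mul_zero, neg_zero, exp_zero]
  ring

lemma integral_exp_neg_sub_exp_neg_mul {b : ℝ} (hb : b ≠ 0) (t : ℝ) :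
    ∫ x in (0 : ℝ)..t, (exp (-x) - exp (-(b * x))) =
      (1 - exp (-t)) - b⁻¹ * (1 - exp (-(b * t))) := by
  have h₁ : ∫ x in (0 : ℝ)..t, exp (-x) = 1 - exp (-t) := by
    simpa only [one_mul] using integral_mul_exp_neg_mul 1 t
  have h₂ : ∫ x in (0 : ℝ)..t, exp (-(b * x)) = b⁻¹ * (1 - exp (-(b * t))) := by
    rw [← integral_mul_exp_neg_mul, ← intervalIntegral.integral_const_mul]
    simp only [← mul_assoc, inv_mul_cancel₀ hb, one_mul]
  rw [intervalIntegral.integral_sub (Continuous.intervalIntegrable (by fun_prop) _ _)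
    (Continuous.intervalIntegrable (by fun_prop) _ _), h₁, h₂]

lemma abs_exp_neg_sub_quadratic_le {x : ℝ} (hx₀ : 0 ≤ x) (hx₁ : x ≤ 1) :
    |exp (-x) - (1 - x + x ^ 2 / 2)| ≤ x ^ 3 := by
  have h := Real.exp_bound (x := -x) (by rwa [abs_neg, abs_of_nonneg hx₀]) (n := 3) (by norm_num)
  norm_num [Finset.sum_range_succ, Nat.factorial, abs_of_nonneg hx₀, ← sub_eq_add_neg] at h
  exact h.trans (mul_le_of_le_one_right (by positivity) (by norm_num))

lemma abs_one_sub_exp_neg_sub_inv_mul_sub_le {b t : ℝ} (hb : 0 < b) (ht : 0 ≤ t)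
    (hbt : (1 + b) * t ≤ 1) :
    |(1 - exp (-t)) - b⁻¹ * (1 - exp (-(b * t))) - (b - 1) / 2 * t ^ 2| ≤ (1 + b ^ 2) * t ^ 3 := by
  set E₁ := exp (-t) - (1 - t + t ^ 2 / 2)
  set E₂ := exp (-(b * t)) - (1 - b * t + (b * t) ^ 2 / 2)
  have hE₁ : |E₁| ≤ t ^ 3 := abs_exp_neg_sub_quadratic_le ht (by nlinarith)
  have hE₂ : |E₂| ≤ (b * t) ^ 3 := abs_exp_neg_sub_quadratic_le (by positivity) (by nlinarith)
  have hsplit : (1 - exp (-t)) - b⁻¹ * (1 - exp (-(b * t))) - (b - 1) / 2 * t ^ 2 =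
      -E₁ + b⁻¹ * E₂ := by
    simp only [E₁, E₂]
    field_simp
    ring
  calc |(1 - exp (-t)) - b⁻¹ * (1 - exp (-(b * t))) - (b - 1) / 2 * t ^ 2|
      ≤ |E₁| + b⁻¹ * |E₂| := by
        rw [hsplit]
        refine (abs_add_le _ _).trans ?_
        rw [abs_neg, abs_mul, abs_of_pos (inv_pos.2 hb)]
    _ ≤ t ^ 3 + b⁻¹ * (b * t) ^ 3 := by gcongr
    _ = (1 + b ^ 2) * t ^ 3 := by field_simp

lemma tendsto_sq_mul_comp_div {f : ℝ → ℝ} {k C c δ : ℝ} (hc : 0 ≤ c) (hδ : 0 < δ)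
    (hf : ∀ t ∈ Icc 0 δ, |f t - k * t ^ 2| ≤ C * t ^ 3) :
    Tendsto (fun ρ => ρ ^ 2 * f (c / ρ)) atTop (𝓝 (k * c ^ 2)) := by
  refine tendsto_sub_nhds_zero_iff.1 <|
    squeeze_zero_norm' (a := fun ρ => C * c ^ 3 / ρ) ?_ (tendsto_const_nhds.div_atTop tendsto_id)
  filter_upwards [eventually_ge_atTop (c / δ), eventually_gt_atTop 0] with ρ hρc hρ
  have ht : c / ρ ∈ Icc 0 δ :=
    ⟨by positivity, (div_le_iff₀ hρ).2 (by rwa [div_le_iff₀' hδ] at hρc)⟩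
  calc ‖ρ ^ 2 * f (c / ρ) - k * c ^ 2‖ = ρ ^ 2 * |f (c / ρ) - k * (c / ρ) ^ 2| := by
        rw [Real.norm_eq_abs, ← abs_of_pos (pow_pos hρ 2), ← abs_mul, abs_of_pos (pow_pos hρ 2)]
        congr 1
        field_simp
    _ ≤ ρ ^ 2 * (C * (c / ρ) ^ 3) := by gcongr; exact hf _ ht
    _ = C * c ^ 3 / ρ := by field_simp

lemma MeasureTheory.Measure.prod_setOf_mul_snd_le_fst_le (μ ν : Measure ℝ) [SFinite ν] {a : ℝ}
    (ha : 0 < a) (t : ℝ) :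
    μ.prod ν {p : ℝ × ℝ | a * p.2 ≤ p.1 ∧ p.1 ≤ t} = ∫⁻ x in Iic t, ν (Iic (x / a)) ∂μ := by
  rw [Measure.prod_apply (by measurability), ← lintegral_indicator measurableSet_Iic]
  congr with x
  by_cases hx : x ≤ t
  · simp only [preimage_ofPred_eq, hx, and_true, indicator_of_mem (mem_Iic.2 hx)]
    congr with y
    rw [le_div_iff₀ ha, mul_comm]
  · simp [hx]

namespace ProbabilityTheory

lemma expMeasure_Iic {r : ℝ} (hr : 0 < r) (z : ℝ) :
    expMeasure r (Iic z) = ENNReal.ofReal (if 0 ≤ z then 1 - exp (-(r * z)) else 0) := by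
  have := isProbabilityMeasure_expMeasure hr
  rw [← ofReal_cdf, cdf_expMeasure_eq hr]

lemma setLIntegral_expMeasure (r : ℝ) {f : ℝ → ENNReal} (hf : Measurable f)
    {s : Set ℝ} (hs : MeasurableSet s) :
    ∫⁻ x in s, f x ∂expMeasure r =
      ∫⁻ x in s ∩ Ici 0, ENNReal.ofReal (r * exp (-(r * x))) * f x := by
  rw [expMeasure, gammaMeasure, setLIntegral_withDensity_eq_setLIntegral_mul _ (f := gammaPDF 1 r)
      (measurable_gammaPDFReal 1 r).ennreal_ofReal hf hs, inter_comm,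
    ← Measure.restrict_restrict measurableSet_Ici, ← lintegral_indicator measurableSet_Ici]
  congr with x
  by_cases hx : 0 ≤ x
  · simp only [indicator_of_mem (mem_Ici.2 hx)]
    exact congrArg (· * f x) (exponentialPDF_of_nonneg (r := r) hx)
  · simp only [indicator_of_notMem (notMem_Ici.2 (not_le.1 hx))]
    exact mul_eq_zero_of_left (exponentialPDF_of_neg (r := r) (not_le.1 hx)) _

lemma toReal_prod_expMeasure_setOf_mul_snd_le_fst_le {a t : ℝ} (ha : 0 < a) (ht : 0 ≤ t) :
    ((expMeasure 1).prod (expMeasure 1) {p : ℝ × ℝ | a * p.2 ≤ p.1 ∧ p.1 ≤ t}).toReal =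
      ∫ x in (0 : ℝ)..t, (exp (-x) - exp (-((1 + a⁻¹) * x))) := by
  have := isProbabilityMeasure_expMeasure one_pos
  have hmono : Monotone fun x => expMeasure 1 (Iic (x / a)) := fun x y hxy =>
    measure_mono (Iic_subset_Iic.2 (by gcongr))
  rw [Measure.prod_setOf_mul_snd_le_fst_le _ _ ha,
    setLIntegral_expMeasure 1 hmono.measurable measurableSet_Iic, Iic_inter_Ici]
  have hdensity : ∀ x ∈ Icc 0 t, ENNReal.ofReal (1 * exp (-(1 * x))) * expMeasure 1 (Iic (x / a)) =
      ENNReal.ofReal (exp (-x) - exp (-((1 + a⁻¹) * x))) := by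
    intro x hx
    rw [expMeasure_Iic one_pos, if_pos (div_nonneg hx.1 ha.le), ← ENNReal.ofReal_mul (by positivity)]
    simp only [one_mul, mul_one, mul_sub, ← exp_add]
    ring_nf
  have hnonneg : ∀ x ∈ Icc 0 t, 0 ≤ exp (-x) - exp (-((1 + a⁻¹) * x)) := fun x hx =>
    sub_nonneg.2 (exp_le_exp.2 (by nlinarith [hx.1, inv_pos.2 ha]))
  rw [setLIntegral_congr_fun measurableSet_Icc hdensity,
    ← ofReal_integral_eq_lintegral_ofReal (Continuous.integrableOn_Icc (by fun_prop))
      (ae_restrict_of_forall_mem measurableSet_Icc hnonneg),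
    ENNReal.toReal_ofReal (setIntegral_nonneg measurableSet_Icc hnonneg),
    integral_Icc_eq_integral_Ioc, intervalIntegral.integral_of_le ht]

end ProbabilityTheory

/-- High-SNR behavior of the pure-NOMA power outage probability: if `X = h_{2,1}` and
`Y = h_{2,2}` are i.i.d. rate-1 exponential channel gains, then
`ρ² · P(e^{2R} Y ≤ X ≤ e^R(e^R - 1)/ρ) → (e^R - 1)²/2` as `ρ → ∞`. -/
theorem stmt_9 {Ω : Type*} [MeasurableSpace Ω] (μ : Measure Ω) [IsProbabilityMeasure μ]
    (X Y : Ω → ℝ) (hX : Measurable X) (hY : Measurable Y) (hXY : IndepFun X Y μ)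
    (hXd : μ.map X = expMeasure 1) (hYd : μ.map Y = expMeasure 1)
    (R : ℝ) (hR : 0 < R) :
    Tendsto (fun ρ : ℝ => ρ ^ 2 *
        (μ {ω | Real.exp (2 * R) * Y ω ≤ X ω ∧
                X ω ≤ Real.exp R * (Real.exp R - 1) / ρ}).toReal)
      atTop (nhds ((Real.exp R - 1) ^ 2 / 2)) := by
  set a := exp (2 * R)
  set b := 1 + a⁻¹
  set c := exp R * (exp R - 1)
  have hb : 0 < b := by positivity
  have hc : 0 ≤ c := mul_nonneg (exp_pos R).le (sub_nonneg.2 (one_le_exp hR.le))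
  have hlaw : μ.map (fun ω => (X ω, Y ω)) = (expMeasure 1).prod (expMeasure 1) := by
    rw [(indepFun_iff_map_prod_eq_prod_map_map hX.aemeasurable hY.aemeasurable).1 hXY, hXd, hYd]
  have hevent (t : ℝ) : μ {ω | a * Y ω ≤ X ω ∧ X ω ≤ t} =
      (expMeasure 1).prod (expMeasure 1) {p : ℝ × ℝ | a * p.2 ≤ p.1 ∧ p.1 ≤ t} := by
    rw [← hlaw, Measure.map_apply (hX.prodMk hY) (by measurability)]
    rfl
  have hlimit : (exp R - 1) ^ 2 / 2 = (b - 1) / 2 * c ^ 2 := by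
    simp only [b, a, c, two_mul, exp_add]
    field_simp
    ring
  have hremainder (t : ℝ) (ht : t ∈ Icc 0 (1 / (1 + b))) :=
    abs_one_sub_exp_neg_sub_inv_mul_sub_le hb ht.1 ((le_div_iff₀' (by positivity)).1 ht.2)
  rw [hlimit]
  refine (tendsto_sq_mul_comp_div hc (by positivity) hremainder).congr' ?_
  filter_upwards [eventually_gt_atTop 0] with ρ hρ
  rw [hevent, toReal_prod_expMeasure_setOf_mul_snd_le_fst_le (exp_pos _) (by positivity),
    integral_exp_neg_sub_exp_neg_mul hb.ne']
end

section
/- Let X and Y be independent rate-1 exponential random variables, R > 0, and define user 2's minimal total transmit power W(X,Y) = (e^R − 1)/Y if Y ≥ X; W(X,Y) = e^R(e^R − 1)/X if Y ≤ e^{−2R}X; and W(X,Y) = 2e^R/√(XY) − e^R/X − 1/Y otherwise. Then user 2's power diversity gain under hybrid NOMA assisted OFDMA equals 2: lim_{ρ→∞} −log P(W(X,Y) ≥ ρ) / log ρ = 2. -/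
/-!
Write `c = e^R (e^R - 1)`, the power that pure NOMA needs at first-subcarrier gain `a`, so
`W = c / a` there. In every regime `W(a, b) ≤ c / max a b`, hence an outage at budget `ρ` forces
both gains below `c / ρ` and has probability at most `(c / ρ)²`. Conversely, with `ε = c / (2ρ)`,
the event `X ∈ (ε, 2ε]`, `Y ≤ e^{-2R} ε` lies in the pure-NOMA regime with `W = c / X ≥ ρ`, and
has probability of order `ε²`. So the outage probability is squeezed between two multiples of
`ρ⁻²`, and its logarithm is `-2 log ρ + O(1)`.
-/

open MeasureTheory ProbabilityTheory Filter

open Real Set Topology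

lemma expMeasure_real_Iic {r t : ℝ} (hr : 0 < r) (ht : 0 ≤ t) :
    (expMeasure r).real (Iic t) = 1 - exp (-(r * t)) := by
  have := isProbabilityMeasure_expMeasure hr
  rw [← cdf_eq_real, cdf_expMeasure_eq hr, if_pos ht]

lemma expMeasure_real_Iic_le {r t : ℝ} (hr : 0 < r) (ht : 0 ≤ t) :
    (expMeasure r).real (Iic t) ≤ r * t := by
  rw [expMeasure_real_Iic hr ht]
  linarith [add_one_le_exp (-(r * t))]

lemma expMeasure_real_Ioc {r u v : ℝ} (hr : 0 < r) (hu : 0 ≤ u) (huv : u ≤ v) :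
    (expMeasure r).real (Ioc u v) = exp (-(r * u)) - exp (-(r * v)) := by
  have := isProbabilityMeasure_expMeasure hr
  rw [measureReal_def, ← measure_cdf (expMeasure r), StieltjesFunction.measure_Ioc,
    cdf_expMeasure_eq hr, cdf_expMeasure_eq hr, if_pos hu, if_pos (hu.trans huv),
    ENNReal.toReal_ofReal]
  · ring
  · have : r * u ≤ r * v := by gcongr
    linarith [exp_le_exp.mpr (neg_le_neg this)]

lemma mul_sub_mul_exp_neg_le_expMeasure_real_Ioc {r u v : ℝ} (hr : 0 < r) (hu : 0 ≤ u)
    (huv : u ≤ v) :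
    r * (v - u) * exp (-(r * v)) ≤ (expMeasure r).real (Ioc u v) := by
  rw [expMeasure_real_Ioc hr hu huv]
  have : exp (-(r * u)) = exp (r * (v - u)) * exp (-(r * v)) := by rw [← exp_add]; ring_nf
  rw [this]
  nlinarith [add_one_le_exp (r * (v - u)), exp_pos (-(r * v))]

lemma tendsto_neg_log_div_log_of_le_of_le {f : ℝ → ℝ} {K C d : ℝ} (hK : 0 < K)
    (hlow : ∀ᶠ ρ in atTop, K / ρ ^ d ≤ f ρ) (hup : ∀ᶠ ρ in atTop, f ρ ≤ C / ρ ^ d) :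
    Tendsto (fun ρ => -log (f ρ) / log ρ) atTop (𝓝 d) := by
  have hlim : ∀ A : ℝ, Tendsto (fun ρ => d - A / log ρ) atTop (𝓝 d) := fun A => by
    simpa using tendsto_const_nhds.sub (tendsto_const_nhds.div_atTop tendsto_log_atTop)
  have hlog : ∀ {A ρ : ℝ}, 1 < ρ → 0 < A / ρ ^ d →
      log (A / ρ ^ d) = log A - d * log ρ := by
    intro A ρ hρ hA
    have hρd : 0 < ρ ^ d := rpow_pos_of_pos (by linarith) d
    rw [log_div (div_pos_iff_of_pos_right hρd |>.mp hA).ne' hρd.ne', log_rpow (by linarith)]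
  refine tendsto_of_tendsto_of_tendsto_of_le_of_le' (hlim (log C)) (hlim (log K)) ?_ ?_
  all_goals
    filter_upwards [hlow, hup, eventually_gt_atTop 1] with ρ hρlow hρup hρ
    have hKρ : 0 < K / ρ ^ d := div_pos hK (rpow_pos_of_pos (by linarith) d)
    have hlogρ : 0 < log ρ := log_pos hρ
    rw [sub_div' hlogρ.ne', div_le_div_iff_of_pos_right hlogρ]
  · have := log_le_log (hKρ.trans_le hρlow) hρup
    rw [hlog hρ (hKρ.trans_le (hρlow.trans hρup))] at this
    linarith
  · have := log_le_log hKρ hρlow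
    rw [hlog hρ hKρ] at this
    linarith

lemma W_eq_of_lt_of_le {R a b : ℝ} (hba : b < a) (hb : b ≤ exp (-(2 * R)) * a) :
    W R a b = exp R * (exp R - 1) / a := by
  rw [W, if_neg hba.not_ge, if_pos hb]

lemma W_le_div_max {R a b : ℝ} (hR : 0 ≤ R) (hb : 0 < b) :
    W R a b ≤ exp R * (exp R - 1) / max a b := by
  have hexpR : 1 ≤ exp R := one_le_exp hR
  unfold W
  split_ifs with hab
  · rw [max_eq_right hab]
    gcongr
    exact le_mul_of_one_le_left (by linarith) hexpR
  · rw [max_eq_left (le_of_not_ge hab)]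
  · rw [max_eq_left (le_of_not_ge hab)]
    have ha : 0 < a := hb.trans (lt_of_not_ge hab)
    obtain ⟨s, hs, rfl⟩ : ∃ s, 0 < s ∧ s ^ 2 = a := ⟨√a, sqrt_pos.2 ha, sq_sqrt ha.le⟩
    obtain ⟨t, ht, rfl⟩ : ∃ t, 0 < t ∧ t ^ 2 = b := ⟨√b, sqrt_pos.2 hb, sq_sqrt hb.le⟩
    rw [← mul_pow, sqrt_sq (by positivity)]
    have hsq : exp R * (exp R - 1) / s ^ 2 - (2 * exp R / (s * t) - exp R / s ^ 2 - 1 / t ^ 2)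
        = (exp R / s - 1 / t) ^ 2 := by
      field_simp
      ring
    nlinarith [sq_nonneg (exp R / s - 1 / t)]

lemma div_le_W_of_mem_Ioc {R ε a b : ℝ} (hR : 0 ≤ R) (hε : 0 ≤ ε) (ha : a ∈ Ioc ε (2 * ε))
    (hb : b ≤ exp (-(2 * R)) * ε) :
    exp R * (exp R - 1) / (2 * ε) ≤ W R a b := by
  obtain ⟨hεa, ha2ε⟩ := ha
  have ha0 : 0 < a := hε.trans_lt hεa
  have hexp : exp (-(2 * R)) ≤ 1 := exp_le_one_iff.mpr (by linarith)
  have hba : b < a := hb.trans_lt (by nlinarith)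
  rw [W_eq_of_lt_of_le hba (hb.trans (by gcongr))]
  have := one_le_exp hR
  gcongr

section Outage

variable {Ω : Type*} [MeasurableSpace Ω] {μ : Measure Ω} {X Y : Ω → ℝ} {R ρ : ℝ}

noncomputable def powerOutageProb (μ : Measure Ω) (X Y : Ω → ℝ) (R ρ : ℝ) : ℝ :=
  μ.real {ω | ρ ≤ W R (X ω) (Y ω)}

lemma ProbabilityTheory.IndepFun.measureReal_inter_preimage_eq_mul (hXY : IndepFun X Y μ)
    (hX : Measurable X) (hY : Measurable Y) {s t : Set ℝ} (hs : MeasurableSet s)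
    (ht : MeasurableSet t) :
    μ.real (X ⁻¹' s ∩ Y ⁻¹' t) = (μ.map X).real s * (μ.map Y).real t := by
  rw [map_measureReal_apply hX hs, map_measureReal_apply hY ht, measureReal_def,
    hXY.measure_inter_preimage_eq_mul s t hs ht, ENNReal.toReal_mul, measureReal_def,
    measureReal_def]

variable [IsFiniteMeasure μ]

lemma powerOutageProb_le (hX : Measurable X) (hY : Measurable Y) (hXY : IndepFun X Y μ)
    (hXd : μ.map X = expMeasure 1) (hYd : μ.map Y = expMeasure 1)
    (hR : 0 ≤ R) (hρ : 0 < ρ) :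
    powerOutageProb μ X Y R ρ ≤ (exp R * (exp R - 1)) ^ 2 / ρ ^ 2 := by
  set c := exp R * (exp R - 1)
  have hc : 0 ≤ c := mul_nonneg (exp_pos R).le (by linarith [one_le_exp hR])
  have hsub : {ω | ρ ≤ W R (X ω) (Y ω)} ⊆
      X ⁻¹' Iic (c / ρ) ∩ Y ⁻¹' Iic (c / ρ) ∪ Y ⁻¹' Iic 0 := by
    intro ω hω
    rcases le_or_gt (Y ω) 0 with hY0 | hY0
    · exact Or.inr hY0
    have hmax : max (X ω) (Y ω) ≤ c / ρ := by
      rw [le_div_iff₀' hρ, ← le_div_iff₀ (lt_max_of_lt_right hY0)]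
      exact hω.trans (W_le_div_max hR hY0)
    exact Or.inl ⟨(le_max_left _ _).trans hmax, (le_max_right _ _).trans hmax⟩
  have hF := fun t (ht : 0 ≤ t) => expMeasure_real_Iic_le one_pos ht
  calc powerOutageProb μ X Y R ρ
      ≤ μ.real (X ⁻¹' Iic (c / ρ) ∩ Y ⁻¹' Iic (c / ρ)) + μ.real (Y ⁻¹' Iic 0) :=
        (measureReal_mono hsub).trans (measureReal_union_le _ _)
    _ = (expMeasure 1).real (Iic (c / ρ)) * (expMeasure 1).real (Iic (c / ρ))
          + (expMeasure 1).real (Iic 0) := by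
        rw [hXY.measureReal_inter_preimage_eq_mul hX hY measurableSet_Iic measurableSet_Iic,
          ← map_measureReal_apply hY measurableSet_Iic, hXd, hYd]
    _ ≤ (1 * (c / ρ)) * (1 * (c / ρ)) + 1 * 0 := by
        gcongr
        · exact hF _ (by positivity)
        · exact hF _ (by positivity)
        · exact hF _ le_rfl
    _ = c ^ 2 / ρ ^ 2 := by ring

lemma le_powerOutageProb (hX : Measurable X) (hY : Measurable Y) (hXY : IndepFun X Y μ)
    (hXd : μ.map X = expMeasure 1) (hYd : μ.map Y = expMeasure 1)
    (hR : 0 < R) (hρ : exp R * (exp R - 1) ≤ 2 * ρ) :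
    exp (-(2 * R)) * exp (-3) * (exp R * (exp R - 1) / 2) ^ 2 / ρ ^ 2
      ≤ powerOutageProb μ X Y R ρ := by
  set c := exp R * (exp R - 1)
  have hc : 0 < c := mul_pos (exp_pos R) (by linarith [one_lt_exp_iff.mpr hR])
  have hρ0 : 0 < ρ := by linarith
  set ε := c / (2 * ρ) with hε_def
  set δ := exp (-(2 * R)) * ε with hδ_def
  have hε : 0 < ε := by positivity
  have hε1 : ε ≤ 1 := (div_le_one (by positivity)).mpr hρ
  have hδε : δ ≤ ε := mul_le_of_le_one_left hε.le (exp_le_one_iff.mpr (by linarith))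
  have hδ : 0 < δ := by positivity
  have hsub : X ⁻¹' Ioc ε (2 * ε) ∩ Y ⁻¹' Ioc 0 δ ⊆ {ω | ρ ≤ W R (X ω) (Y ω)} := by
    rintro ω ⟨hXω, hYω⟩
    have : c / (2 * ε) = ρ := by rw [hε_def]; field_simp
    exact this ▸ div_le_W_of_mem_Ioc hR.le hε.le hXω hYω.2
  calc exp (-(2 * R)) * exp (-3) * (c / 2) ^ 2 / ρ ^ 2
      = (ε * exp (-2)) * (δ * exp (-1)) := by
        rw [show (-3 : ℝ) = -2 + -1 by norm_num, exp_add, hδ_def, hε_def]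
        field_simp
    _ ≤ (expMeasure 1).real (Ioc ε (2 * ε)) * (expMeasure 1).real (Ioc 0 δ) := by
        refine mul_le_mul ?_ ?_ (by positivity) measureReal_nonneg
        · refine le_trans ?_
            (mul_sub_mul_exp_neg_le_expMeasure_real_Ioc one_pos hε.le (by linarith))
          have : exp (-2) ≤ exp (-(1 * (2 * ε))) := exp_le_exp.mpr (by linarith)
          nlinarith
        · refine le_trans ?_ (mul_sub_mul_exp_neg_le_expMeasure_real_Ioc one_pos le_rfl hδ.le)
          have : exp (-1) ≤ exp (-(1 * δ)) := exp_le_exp.mpr (by linarith)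
          nlinarith
    _ = μ.real (X ⁻¹' Ioc ε (2 * ε) ∩ Y ⁻¹' Ioc 0 δ) := by
        rw [hXY.measureReal_inter_preimage_eq_mul hX hY measurableSet_Ioc measurableSet_Ioc,
          hXd, hYd]
    _ ≤ powerOutageProb μ X Y R ρ := measureReal_mono hsub

end Outage

/-- Corollary 2: user 2's power diversity gain under hybrid NOMA assisted OFDMA equals 2,
where `X, Y` are user 2's i.i.d. rate-1 exponential channel gains on the two subcarriers:
`-log P(W(X,Y) ≥ ρ) / log ρ → 2` as `ρ → ∞`. -/
theorem stmt_14 {Ω : Type*} [MeasurableSpace Ω] (μ : Measure Ω) [IsProbabilityMeasure μ]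
    (X Y : Ω → ℝ) (hX : Measurable X) (hY : Measurable Y) (hXY : IndepFun X Y μ)
    (hXd : μ.map X = expMeasure 1) (hYd : μ.map Y = expMeasure 1)
    (R : ℝ) (hR : 0 < R) :
    Tendsto (fun ρ : ℝ =>
        -Real.log (μ {ω | ρ ≤ W R (X ω) (Y ω)}).toReal / Real.log ρ)
      atTop (nhds 2) := by
  refine tendsto_neg_log_div_log_of_le_of_le (f := powerOutageProb μ X Y R)
    (K := exp (-(2 * R)) * exp (-3) * (exp R * (exp R - 1) / 2) ^ 2)
    (C := (exp R * (exp R - 1)) ^ 2) ?_ ?_ ?_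
  · have := one_lt_exp_iff.mpr hR
    positivity
  · filter_upwards [eventually_ge_atTop (exp R * (exp R - 1) / 2)] with ρ hρ
    rw [rpow_two]
    exact le_powerOutageProb hX hY hXY hXd hYd hR (by linarith)
  · filter_upwards [eventually_gt_atTop 0] with ρ hρ
    rw [rpow_two]
    exact powerOutageProb_le hX hY hXY hXd hYd hR.le hρ
end
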